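/- Assume (V1) and (f1)–(f4). Then for every ε > 0 and every u ∈ Θ_ε with u ≥ 0 almost everywhere, there exists a unique t_ε = t_ε(u) > 0 such that t_ε·u ∈ M_ε; moreover I_ε(t_ε·u) = sup_{t>0} I_ε(t·u). -/

import Mathlib

/-!
Along the ray through `u ≥ 0`, `t u` lies on the Nehari manifold exactly when
`ψ(t) := ∫ (f (t u) / (t u)) u² = ‖u‖_ε²`. Since `f(s)/s` increases strictly from `0` to `l₀`,
`ψ` is continuous and strictly increasing on `(0, ∞)` and runs from `0` to `l₀ |u|₂²`
(dominated convergence); `V₀ > 0` and `u ∈ Θ_ε` put `‖u‖_ε²` strictly in between, which gives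
a unique `t_ε`. Monotonicity of `f(s)/s` also gives `F(b) - F(a) ≥ (f(a)/a) (b² - a²)/2`
for `a, b > 0`; integrated with `a = t_ε u`, `b = t u` this is `I_ε(t u) ≤ I_ε(t_ε u)`.
-/

open MeasureTheory Filter Topology Set
open scoped ENNReal NNReal

noncomputable section

abbrev RN (N : ℕ) : Type := EuclideanSpace ℝ (Fin N)

/-- Gagliardo seminorm squared `[u]_α²`, as an extended nonnegative real. -/
def gagE (N : ℕ) (α : ℝ) (u : RN N → ℝ) : ℝ≥0∞ :=
  ∫⁻ x : RN N, ∫⁻ y : RN N, ENNReal.ofReal ((u x - u y) ^ 2 / ‖x - y‖ ^ ((N : ℝ) + 2 * α))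

/-- `[u]_α²` as a real number. -/
def gagSq (N : ℕ) (α : ℝ) (u : RN N → ℝ) : ℝ := (gagE N α u).toReal

/-- Membership in the fractional Sobolev space `H^α(ℝ^N)`. -/
def memHalpha (N : ℕ) (α : ℝ) (u : RN N → ℝ) : Prop :=
  MemLp u 2 (volume : Measure (RN N)) ∧ gagE N α u < ⊤

/-- Squared `L²` norm. -/
def l2Sq (N : ℕ) (u : RN N → ℝ) : ℝ := ∫ x : RN N, (u x) ^ 2

/-- Norm on `H^α`. -/
def normH (N : ℕ) (α : ℝ) (u : RN N → ℝ) : ℝ := Real.sqrt (gagSq N α u + l2Sq N u)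

/-- The Gagliardo bilinear form `B(u,φ)`. -/
def Bform (N : ℕ) (α : ℝ) (u φ : RN N → ℝ) : ℝ :=
  ∫ x : RN N, ∫ y : RN N, ((u x - u y) * (φ x - φ y)) / ‖x - y‖ ^ ((N : ℝ) + 2 * α)

/-- `F(t) = ∫₀ᵗ f(s) ds`. -/
def Fprim (f : ℝ → ℝ) (t : ℝ) : ℝ := ∫ s in (0 : ℝ)..t, f s

/-- `‖u‖_ε²`. -/
def normEpsSq (N : ℕ) (α : ℝ) (V : RN N → ℝ) (ε : ℝ) (u : RN N → ℝ) : ℝ :=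
  gagSq N α u + ∫ x : RN N, V (ε • x) * (u x) ^ 2

/-- The energy functional `I_ε`. -/
def Ieps (N : ℕ) (α : ℝ) (V : RN N → ℝ) (f : ℝ → ℝ) (ε : ℝ) (u : RN N → ℝ) : ℝ :=
  normEpsSq N α V ε u / 2 - ∫ x : RN N, Fprim f (u x)

/-- The Nehari manifold `M_ε`. -/
def Nehari (N : ℕ) (α : ℝ) (V : RN N → ℝ) (f : ℝ → ℝ) (ε : ℝ) : Set (RN N → ℝ) :=
  {u | memHalpha N α u ∧ u ≠ 0 ∧ normEpsSq N α V ε u = ∫ x : RN N, f (u x) * u x}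

/-- The least energy `c_ε`. -/
def ceps (N : ℕ) (α : ℝ) (V : RN N → ℝ) (f : ℝ → ℝ) (ε : ℝ) : ℝ :=
  sInf (Ieps N α V f ε '' Nehari N α V f ε)

/-- The restricted set `Θ_ε`. -/
def ThetaEps (N : ℕ) (α : ℝ) (V : RN N → ℝ) (l₀ ε : ℝ) : Set (RN N → ℝ) :=
  {u | memHalpha N α u ∧ normEpsSq N α V ε u - l₀ * l2Sq N u < 0}

/-- The autonomous energy functional `I_a`. -/
def Ia (N : ℕ) (α a : ℝ) (f : ℝ → ℝ) (u : RN N → ℝ) : ℝ :=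
  (gagSq N α u + a * l2Sq N u) / 2 - ∫ x : RN N, Fprim f (u x)

/-- The autonomous Nehari manifold `M_a`. -/
def NehariA (N : ℕ) (α a : ℝ) (f : ℝ → ℝ) : Set (RN N → ℝ) :=
  {u | memHalpha N α u ∧ u ≠ 0 ∧ gagSq N α u + a * l2Sq N u = ∫ x : RN N, f (u x) * u x}

/-- The autonomous least energy `c_a`. -/
def ca (N : ℕ) (α a : ℝ) (f : ℝ → ℝ) : ℝ := sInf (Ia N α a f '' NehariA N α a f)

/-- `V₀ = inf V`. -/
def V0 (N : ℕ) (V : RN N → ℝ) : ℝ := sInf (Set.range V)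

/-- `V_∞ = liminf_{|x|→∞} V(x)`. -/
def Vinf (N : ℕ) (V : RN N → ℝ) : ℝ := Filter.liminf V (Filter.cocompact (RN N))

/-- The Gâteaux derivative `I'_ε(u)[φ]`. -/
def Ideriv (N : ℕ) (α : ℝ) (V : RN N → ℝ) (f : ℝ → ℝ) (ε : ℝ) (u φ : RN N → ℝ) : ℝ :=
  Bform N α u φ + (∫ x : RN N, V (ε • x) * u x * φ x) - ∫ x : RN N, f (u x) * φ x

section RealVariable

variable {φ : ℝ → ℝ} {x₀ a b c : ℝ}

lemma MonotoneOn.mem_Icc_of_tendsto_nhdsGT_of_tendsto_atTop (hφ : MonotoneOn φ (Ioi x₀))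
    (h₀ : Tendsto φ (𝓝[>] x₀) (𝓝 a)) (htop : Tendsto φ atTop (𝓝 b)) {t : ℝ} (ht : x₀ < t) :
    φ t ∈ Icc a b := by
  constructor
  · refine le_of_tendsto h₀ ?_
    filter_upwards [Ioo_mem_nhdsGT ht] with s hs
    exact hφ hs.1 ht hs.2.le
  · refine ge_of_tendsto htop ?_
    filter_upwards [eventually_ge_atTop t] with s hs
    exact hφ ht (ht.trans_le hs) hs

lemma ContinuousOn.exists_eq_of_tendsto_nhdsGT_of_tendsto_atTop (hφ : ContinuousOn φ (Ioi x₀))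
    (h₀ : Tendsto φ (𝓝[>] x₀) (𝓝 a)) (htop : Tendsto φ atTop (𝓝 b)) (hc : c ∈ Ioo a b) :
    ∃ t, x₀ < t ∧ φ t = c := by
  obtain ⟨t₁, ht₁c, ht₁⟩ := ((h₀.eventually (gt_mem_nhds hc.1)).and self_mem_nhdsWithin).exists
  obtain ⟨t₂, ht₂c, ht₁₂⟩ :=
    ((htop.eventually (lt_mem_nhds hc.2)).and (eventually_ge_atTop t₁)).exists
  obtain ⟨t, ht, hφt⟩ := intermediate_value_Icc ht₁₂
    (hφ.mono fun s hs => lt_of_lt_of_le ht₁ hs.1) ⟨ht₁c.le, ht₂c.le⟩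
  exact ⟨t, lt_of_lt_of_le ht₁ ht.1, hφt⟩

end RealVariable

section Primitive

variable {f : ℝ → ℝ}

lemma Fprim_sub_Fprim (hf : Continuous f) (a b : ℝ) :
    Fprim f b - Fprim f a = ∫ s in a..b, f s :=
  intervalIntegral.integral_interval_sub_left (hf.intervalIntegrable 0 b)
    (hf.intervalIntegrable 0 a)

lemma continuous_Fprim (hf : Continuous f) : Continuous (Fprim f) :=
  intervalIntegral.continuous_primitive (fun a b => hf.intervalIntegrable a b) 0

lemma abs_Fprim_le {C t : ℝ} (hf : Continuous f) (ht : 0 ≤ t)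
    (hC : ∀ s, 0 ≤ s → |f s| ≤ C * s) : |Fprim f t| ≤ C * t ^ 2 / 2 :=
  calc |Fprim f t| ≤ ∫ s in (0 : ℝ)..t, |f s| := intervalIntegral.abs_integral_le_integral_abs ht
    _ ≤ ∫ s in (0 : ℝ)..t, C * s :=
        intervalIntegral.integral_mono_on ht (hf.abs.intervalIntegrable _ _)
          ((continuous_const.mul continuous_id).intervalIntegrable _ _) fun s hs => hC s hs.1
    _ = C * t ^ 2 / 2 := by
        rw [intervalIntegral.integral_const_mul, integral_id]; ring

/-- On `(0, ∞)`, `f s - (f a / a) * s` has the sign of `s - a`; integrate it from `a` to `b`. -/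
lemma div_self_mul_sq_sub_sq_le_Fprim_sub (hf : Continuous f)
    (hmono : MonotoneOn (fun s => f s / s) (Ioi 0)) {a b : ℝ} (ha : 0 < a) (hb : 0 < b) :
    f a / a * (b ^ 2 - a ^ 2) / 2 ≤ Fprim f b - Fprim f a := by
  have hline : ∫ s in a..b, f a / a * s = f a / a * (b ^ 2 - a ^ 2) / 2 := by
    rw [intervalIntegral.integral_const_mul, integral_id]; ring
  have hlin_int : ∀ p q : ℝ, IntervalIntegrable (fun s => f a / a * s) volume p q :=
    fun p q => (continuous_const.mul continuous_id).intervalIntegrable p q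
  have hf_eq : ∀ s, 0 < s → f s = f s / s * s := fun s hs => by field_simp
  rw [Fprim_sub_Fprim hf, ← hline]
  rcases le_total a b with hab | hba
  · refine intervalIntegral.integral_mono_on hab (hlin_int a b) (hf.intervalIntegrable a b)
      fun s hs => ?_
    have hs0 : 0 < s := ha.trans_le hs.1
    rw [hf_eq s hs0]
    exact mul_le_mul_of_nonneg_right (hmono ha hs0 hs.1) hs0.le
  · rw [intervalIntegral.integral_symm b a, intervalIntegral.integral_symm b a, neg_le_neg_iff]
    refine intervalIntegral.integral_mono_on hba (hf.intervalIntegrable b a) (hlin_int b a)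
      fun s hs => ?_
    have hs0 : 0 < s := hb.trans_le hs.1
    rw [hf_eq s hs0]
    exact mul_le_mul_of_nonneg_right (hmono hs0 ha hs.2) hs0.le

lemma abs_le_mul_of_monotoneOn_div_self {l s : ℝ} (hf0 : f 0 = 0)
    (hmono : MonotoneOn (fun s => f s / s) (Ioi 0)) (h₀ : Tendsto (fun s => f s / s) (𝓝[>] 0) (𝓝 0))
    (htop : Tendsto (fun s => f s / s) atTop (𝓝 l)) (hs : 0 ≤ s) : |f s| ≤ l * s := by
  rcases hs.lt_or_eq with hs | rfl
  · have := hmono.mem_Icc_of_tendsto_nhdsGT_of_tendsto_atTop h₀ htop hs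
    rw [mem_Icc, le_div_iff₀ hs, div_le_iff₀ hs, zero_mul] at this
    exact abs_le.2 ⟨by linarith, this.2⟩
  · simp [hf0]

end Primitive

section RayIntegral

variable {X : Type*} [MeasurableSpace X] {μ : Measure X} {g : ℝ → ℝ} {u : X → ℝ} {C : ℝ}

def rayIntegral (μ : Measure X) (g : ℝ → ℝ) (u : X → ℝ) (t : ℝ) : ℝ :=
  ∫ x, g (t * u x) * u x ^ 2 ∂μ

lemma aestronglyMeasurable_comp_mul_mul_sq (hg : Measurable g) (hu : AEStronglyMeasurable u μ)
    (t : ℝ) : AEStronglyMeasurable (fun x => g (t * u x) * u x ^ 2) μ :=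
  (hg.comp_aemeasurable (hu.aemeasurable.const_mul t)).aestronglyMeasurable.mul (hu.pow 2)

lemma ae_norm_comp_mul_mul_sq_le (hgC : ∀ s, 0 ≤ s → |g s| ≤ C) (hpos : ∀ᵐ x ∂μ, 0 ≤ u x)
    {t : ℝ} (ht : 0 ≤ t) : ∀ᵐ x ∂μ, ‖g (t * u x) * u x ^ 2‖ ≤ C * u x ^ 2 := by
  filter_upwards [hpos] with x hx
  rw [norm_mul, Real.norm_eq_abs, Real.norm_eq_abs, abs_of_nonneg (sq_nonneg (u x))]
  exact mul_le_mul_of_nonneg_right (hgC _ (mul_nonneg ht hx)) (sq_nonneg _)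

lemma integrable_comp_mul_mul_sq (hg : Measurable g) (hgC : ∀ s, 0 ≤ s → |g s| ≤ C)
    (hu : AEStronglyMeasurable u μ) (hu2 : Integrable (fun x => u x ^ 2) μ)
    (hpos : ∀ᵐ x ∂μ, 0 ≤ u x) {t : ℝ} (ht : 0 ≤ t) :
    Integrable (fun x => g (t * u x) * u x ^ 2) μ :=
  (hu2.const_mul C).mono' (aestronglyMeasurable_comp_mul_mul_sq hg hu t)
    (ae_norm_comp_mul_mul_sq_le hgC hpos ht)

lemma tendsto_rayIntegral {l l' : Filter ℝ} [l.IsCountablyGenerated] {a : ℝ}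
    (hg : Measurable g) (hgC : ∀ s, 0 ≤ s → |g s| ≤ C) (hu : AEStronglyMeasurable u μ)
    (hu2 : Integrable (fun x => u x ^ 2) μ) (hpos : ∀ᵐ x ∂μ, 0 ≤ u x)
    (hl₀ : ∀ᶠ t in l, 0 ≤ t) (hl : ∀ c, 0 < c → Tendsto (fun t => t * c) l l')
    (hga : Tendsto g l' (𝓝 a)) :
    Tendsto (rayIntegral μ g u) l (𝓝 (a * ∫ x, u x ^ 2 ∂μ)) := by
  rw [← integral_const_mul]
  refine tendsto_integral_filter_of_dominated_convergence _
    (Eventually.of_forall (aestronglyMeasurable_comp_mul_mul_sq hg hu))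
    (hl₀.mono fun t ht => ae_norm_comp_mul_mul_sq_le hgC hpos ht) (hu2.const_mul C) ?_
  filter_upwards [hpos] with x hx
  rcases hx.lt_or_eq with hx | hx
  · exact ((hga.comp (hl _ hx)).mul_const _)
  · simpa [← hx] using tendsto_const_nhds

lemma continuousOn_rayIntegral (hg : Measurable g) (hgC : ∀ s, 0 ≤ s → |g s| ≤ C)
    (hgc : ContinuousOn g (Ioi 0)) (hu : AEStronglyMeasurable u μ)
    (hu2 : Integrable (fun x => u x ^ 2) μ) (hpos : ∀ᵐ x ∂μ, 0 ≤ u x) :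
    ContinuousOn (rayIntegral μ g u) (Ioi 0) := by
  refine continuousOn_of_dominated (fun t _ => aestronglyMeasurable_comp_mul_mul_sq hg hu t)
    (fun t ht => ae_norm_comp_mul_mul_sq_le hgC hpos (le_of_lt ht)) (hu2.const_mul C) ?_
  filter_upwards [hpos] with x hx
  rcases hx.lt_or_eq with hx | hx
  · exact (hgc.comp (continuousOn_id.mul continuousOn_const)
      fun t ht => mul_pos ht hx).mul continuousOn_const
  · simpa [← hx] using continuousOn_const

lemma strictMonoOn_rayIntegral (hg : Measurable g) (hgC : ∀ s, 0 ≤ s → |g s| ≤ C)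
    (hgm : StrictMonoOn g (Ioi 0)) (hu : AEStronglyMeasurable u μ)
    (hu2 : Integrable (fun x => u x ^ 2) μ) (hpos : ∀ᵐ x ∂μ, 0 ≤ u x) (hu0 : ¬u =ᵐ[μ] 0) :
    StrictMonoOn (rayIntegral μ g u) (Ioi 0) := by
  intro t₁ ht₁ t₂ ht₂ hlt
  have hint : ∀ t ∈ Ioi (0 : ℝ), Integrable (fun x => g (t * u x) * u x ^ 2) μ :=
    fun t ht => integrable_comp_mul_mul_sq hg hgC hu hu2 hpos (le_of_lt ht)
  set D : X → ℝ := fun x => g (t₂ * u x) * u x ^ 2 - g (t₁ * u x) * u x ^ 2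
  have hD : ∀ᵐ x ∂μ, 0 ≤ D x ∧ (u x ≠ 0 → 0 < D x) := by
    filter_upwards [hpos] with x hx
    rcases hx.lt_or_eq with hux | hux
    · have hDx : 0 < D x := by
        simp only [D, ← sub_mul]
        exact mul_pos (sub_pos.2 (hgm (mul_pos ht₁ hux) (mul_pos ht₂ hux)
          (mul_lt_mul_of_pos_right hlt hux))) (pow_pos hux 2)
      exact ⟨hDx.le, fun _ => hDx⟩
    · simp [D, ← hux]
  have hsupp : 0 < μ (Function.support D) := by
    refine pos_iff_ne_zero.2 fun h => hu0 ?_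
    rw [EventuallyEq, ae_iff]
    refine measure_mono_null_ae ?_ h
    filter_upwards [hD] with x hx hux
    exact (hx.2 hux).ne'
  have hD_int := (integral_pos_iff_support_of_nonneg_ae (hD.mono fun x hx => hx.1)
    ((hint t₂ ht₂).sub (hint t₁ ht₁))).2 hsupp
  rwa [integral_sub (hint t₂ ht₂) (hint t₁ ht₁), sub_pos] at hD_int

lemma exists_rayIntegral_eq {b A : ℝ} (hg : Measurable g) (hgC : ∀ s, 0 ≤ s → |g s| ≤ C)
    (hgc : ContinuousOn g (Ioi 0)) (hg₀ : Tendsto g (𝓝[>] 0) (𝓝 0))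
    (hgtop : Tendsto g atTop (𝓝 b)) (hu : AEStronglyMeasurable u μ)
    (hu2 : Integrable (fun x => u x ^ 2) μ) (hpos : ∀ᵐ x ∂μ, 0 ≤ u x)
    (hA : A ∈ Ioo 0 (b * ∫ x, u x ^ 2 ∂μ)) :
    ∃ τ, 0 < τ ∧ rayIntegral μ g u τ = A := by
  have hψ₀ := tendsto_rayIntegral (l := 𝓝[>] 0) hg hgC hu hu2 hpos
    (eventually_mem_nhdsWithin.mono fun t ht => le_of_lt ht)
    (fun c hc => by simpa using TendstoNhdsWithinIoi.mul_const hc (tendsto_id (x := 𝓝[>] 0)))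
    hg₀
  have hψtop := tendsto_rayIntegral hg hgC hu hu2 hpos (eventually_ge_atTop 0)
    (fun c hc => tendsto_id.atTop_mul_const hc) hgtop
  rw [zero_mul] at hψ₀
  exact (continuousOn_rayIntegral hg hgC hgc hu hu2 hpos
    ).exists_eq_of_tendsto_nhdsGT_of_tendsto_atTop hψ₀ hψtop hA

end RayIntegral

section RayEnergy

variable {X : Type*} [MeasurableSpace X] {μ : Measure X} {f : ℝ → ℝ} {u : X → ℝ} {C : ℝ}

lemma integral_mul_comp_mul_eq_sq_mul_rayIntegral (f : ℝ → ℝ) (μ : Measure X) (u : X → ℝ)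
    (t : ℝ) :
    ∫ x, f (t * u x) * (t * u x) ∂μ = t ^ 2 * rayIntegral μ (fun s => f s / s) u t := by
  rw [rayIntegral, ← integral_const_mul]
  congr 1 with x
  rcases eq_or_ne (t * u x) 0 with h | h
  · simp [h]
  · field_simp

lemma abs_div_self_le (hfC : ∀ s, 0 ≤ s → |f s| ≤ C * s) {s : ℝ} (hs : 0 ≤ s) :
    |f s / s| ≤ C := by
  rcases hs.lt_or_eq with hs | rfl
  · rw [abs_div, abs_of_pos hs, div_le_iff₀ hs]
    exact hfC s hs.le
  · simpa using (abs_nonneg _).trans (hfC 1 zero_le_one)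

lemma integrable_Fprim_comp_mul (hf : Continuous f) (hfC : ∀ s, 0 ≤ s → |f s| ≤ C * s)
    (hu : AEStronglyMeasurable u μ) (hu2 : Integrable (fun x => u x ^ 2) μ)
    (hpos : ∀ᵐ x ∂μ, 0 ≤ u x) {t : ℝ} (ht : 0 ≤ t) :
    Integrable (fun x => Fprim f (t * u x)) μ := by
  refine (hu2.const_mul (C * t ^ 2 / 2)).mono'
    ((continuous_Fprim hf).comp_aestronglyMeasurable (hu.const_mul t)) ?_
  filter_upwards [hpos] with x hx
  calc ‖Fprim f (t * u x)‖ ≤ C * (t * u x) ^ 2 / 2 :=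
        abs_Fprim_le hf (mul_nonneg ht hx) hfC
    _ = C * t ^ 2 / 2 * u x ^ 2 := by ring

lemma integral_Fprim_comp_mul_add_le (hf : Continuous f)
    (hmono : MonotoneOn (fun s => f s / s) (Ioi 0)) (hfC : ∀ s, 0 ≤ s → |f s| ≤ C * s)
    (hu : AEStronglyMeasurable u μ) (hu2 : Integrable (fun x => u x ^ 2) μ)
    (hpos : ∀ᵐ x ∂μ, 0 ≤ u x) {τ t : ℝ} (hτ : 0 < τ) (ht : 0 < t) :
    ∫ x, Fprim f (τ * u x) ∂μ + (t ^ 2 - τ ^ 2) / 2 * rayIntegral μ (fun s => f s / s) u τ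
      ≤ ∫ x, Fprim f (t * u x) ∂μ := by
  have hFτ := integrable_Fprim_comp_mul hf hfC hu hu2 hpos hτ.le
  have hray := integrable_comp_mul_mul_sq (g := fun s => f s / s) (hf.measurable.div measurable_id)
    (fun s hs => abs_div_self_le hfC hs) hu hu2 hpos hτ.le
  rw [rayIntegral, ← integral_const_mul, ← integral_add hFτ (hray.const_mul _)]
  refine integral_mono_ae (hFτ.add (hray.const_mul _))
    (integrable_Fprim_comp_mul hf hfC hu hu2 hpos ht.le) ?_
  filter_upwards [hpos] with x hx
  rcases hx.lt_or_eq with hx | hx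
  · have := div_self_mul_sq_sub_sq_le_Fprim_sub hf hmono (mul_pos hτ hx) (mul_pos ht hx)
    linarith
  · simp [← hx]

end RayEnergy

section FractionalEnergy

variable {N : ℕ} {α : ℝ} {V : RN N → ℝ} {f : ℝ → ℝ} {ε : ℝ} {u : RN N → ℝ}

lemma gagE_const_mul (t : ℝ) (u : RN N → ℝ) :
    gagE N α (fun x => t * u x) = ENNReal.ofReal (t ^ 2) * gagE N α u := by
  simp only [gagE, ← lintegral_const_mul' _ _ ENNReal.ofReal_ne_top,
    ← ENNReal.ofReal_mul (sq_nonneg t)]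
  refine lintegral_congr fun x => lintegral_congr fun y => ?_
  congr 1
  ring

lemma gagSq_const_mul (t : ℝ) (u : RN N → ℝ) :
    gagSq N α (fun x => t * u x) = t ^ 2 * gagSq N α u := by
  rw [gagSq, gagSq, gagE_const_mul, ENNReal.toReal_mul, ENNReal.toReal_ofReal (sq_nonneg t)]

lemma normEpsSq_const_mul (t : ℝ) (u : RN N → ℝ) :
    normEpsSq N α V ε (fun x => t * u x) = t ^ 2 * normEpsSq N α V ε u := by
  rw [normEpsSq, normEpsSq, gagSq_const_mul, mul_add, ← integral_const_mul]
  congr 2 with x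
  ring

lemma memHalpha.const_mul (hu : memHalpha N α u) (t : ℝ) :
    memHalpha N α (fun x => t * u x) :=
  ⟨hu.1.const_mul t, by
    rw [gagE_const_mul]; exact ENNReal.mul_lt_top ENNReal.ofReal_lt_top hu.2⟩

lemma V0_mul_l2Sq_le_normEpsSq {M : ℝ} (hVc : Continuous V) (hM : ∀ x, |V x| ≤ M)
    (hu : memHalpha N α u) : V0 N V * l2Sq N u ≤ normEpsSq N α V ε u := by
  have hu2 := hu.1.integrable_sq
  have hbdd : BddBelow (range V) :=
    ⟨-M, forall_mem_range.2 fun y => neg_le_of_abs_le (hM y)⟩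
  have hVu : Integrable (fun x => V (ε • x) * u x ^ 2) :=
    hu2.bdd_mul (hVc.comp (continuous_const_smul ε)).aestronglyMeasurable
      (Eventually.of_forall fun x => (Real.norm_eq_abs _).trans_le (hM _))
  have hV : V0 N V * l2Sq N u ≤ ∫ x, V (ε • x) * u x ^ 2 := by
    rw [l2Sq, ← integral_const_mul]
    exact integral_mono (hu2.const_mul _) hVu fun x =>
      mul_le_mul_of_nonneg_right (csInf_le hbdd (mem_range_self _)) (sq_nonneg _)
  have hgag : 0 ≤ gagSq N α u := ENNReal.toReal_nonneg
  rw [normEpsSq]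
  linarith

lemma const_mul_mem_Nehari_iff (hu : memHalpha N α u) (hu0 : u ≠ 0) {t : ℝ} (ht : 0 < t) :
    (fun x => t * u x) ∈ Nehari N α V f ε ↔
      rayIntegral volume (fun s => f s / s) u t = normEpsSq N α V ε u := by
  have htu : (fun x => t * u x) ≠ 0 := fun h =>
    hu0 (funext fun x => (mul_eq_zero.1 (congrFun h x)).resolve_left ht.ne')
  simp only [Nehari, mem_ofPred_eq, hu.const_mul t, htu, ne_eq, not_false_eq_true, true_and,
    normEpsSq_const_mul, integral_mul_comp_mul_eq_sq_mul_rayIntegral]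
  rw [mul_right_inj' (pow_pos ht 2).ne', eq_comm]

lemma Ieps_const_mul_le_of_rayIntegral_eq {C : ℝ} (hf : Continuous f)
    (hmono : MonotoneOn (fun s => f s / s) (Ioi 0)) (hfC : ∀ s, 0 ≤ s → |f s| ≤ C * s)
    (hu : memHalpha N α u) (hpos : ∀ᵐ x, 0 ≤ u x) {τ t : ℝ} (hτ : 0 < τ) (ht : 0 < t)
    (hτu : rayIntegral volume (fun s => f s / s) u τ = normEpsSq N α V ε u) :
    Ieps N α V f ε (fun x => t * u x) ≤ Ieps N α V f ε (fun x => τ * u x) := by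
  have := integral_Fprim_comp_mul_add_le hf hmono hfC hu.1.aestronglyMeasurable
    hu.1.integrable_sq hpos hτ ht
  rw [hτu] at this
  simp only [Ieps, normEpsSq_const_mul]
  linarith

lemma l2Sq_nonneg (u : RN N → ℝ) : 0 ≤ l2Sq N u :=
  integral_nonneg fun x => sq_nonneg (u x)

lemma not_eventuallyEq_zero_of_l2Sq_pos (hL : 0 < l2Sq N u) : ¬u =ᵐ[volume] 0 := fun h =>
  hL.ne' <| by
    rw [l2Sq, integral_congr_ae (h.mono fun x hx => by simp [hx] : (fun x => u x ^ 2) =ᵐ[volume] 0)]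
    simp

end FractionalEnergy

theorem statement5_general
    (N : ℕ) (α : ℝ)
    (f : ℝ → ℝ) (l₀ : ℝ) (V : RN N → ℝ)
    (hVc : Continuous V) (hVbd : ∃ M : ℝ, M < l₀ ∧ ∀ x, |V x| ≤ M)
    (hV0 : 0 < V0 N V)
    (hf1 : ContDiff ℝ 1 f) (hf1' : ∀ t ≤ (0 : ℝ), f t = 0)
    (hf1'' : Tendsto (fun t => f t / t) (𝓝[>] (0 : ℝ)) (𝓝 0))
    (hf3 : Tendsto (fun t => f t / t) atTop (𝓝 l₀))
    (hf4 : StrictMonoOn (fun t => f t / t) (Set.Ioi (0 : ℝ)))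
    :
    ∀ ε : ℝ, 0 < ε → ∀ u ∈ ThetaEps N α V l₀ ε,
      (∀ᵐ x : RN N ∂(volume : Measure (RN N)), 0 ≤ u x) →
      ∃ tε : ℝ, 0 < tε ∧ (fun x => tε * u x) ∈ Nehari N α V f ε ∧
        (∀ t : ℝ, 0 < t → (fun x => t * u x) ∈ Nehari N α V f ε → t = tε) ∧
        ∀ t : ℝ, 0 < t →
          Ieps N α V f ε (fun x => t * u x) ≤ Ieps N α V f ε (fun x => tε * u x) := by
  intro ε _ u ⟨hu, hΘ⟩ hpos
  obtain ⟨M, -, hM⟩ := hVbd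
  have hf := hf1.continuous
  have hfC : ∀ s, 0 ≤ s → |f s| ≤ l₀ * s := fun s =>
    abs_le_mul_of_monotoneOn_div_self (hf1' 0 le_rfl) hf4.monotoneOn hf1'' hf3
  have hgC : ∀ s, 0 ≤ s → |f s / s| ≤ l₀ := fun s => abs_div_self_le hfC
  have hg : Measurable fun s => f s / s := hf.measurable.div measurable_id
  have hVL := V0_mul_l2Sq_le_normEpsSq (ε := ε) hVc hM hu
  have hΘ' : normEpsSq N α V ε u < l₀ * l2Sq N u := sub_neg.1 hΘ
  have hL : 0 < l2Sq N u := (l2Sq_nonneg u).lt_of_ne fun h => by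
    rw [← h, mul_zero] at hVL hΘ'
    linarith
  have hu0 := not_eventuallyEq_zero_of_l2Sq_pos hL
  have hune : u ≠ 0 := fun h => hu0 (h ▸ EventuallyEq.rfl)
  obtain ⟨τ, hτ, hτu⟩ := exists_rayIntegral_eq hg hgC
    (hf.continuousOn.div continuousOn_id fun s hs => ne_of_gt hs) hf1'' hf3
    hu.1.aestronglyMeasurable hu.1.integrable_sq hpos
    ⟨(mul_pos hV0 hL).trans_le hVL, hΘ'⟩
  refine ⟨τ, hτ, (const_mul_mem_Nehari_iff hu hune hτ).2 hτu, fun t ht htu => ?_,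
    fun t ht => Ieps_const_mul_le_of_rayIntegral_eq hf hf4.monotoneOn hfC hu hpos hτ ht hτu⟩
  exact (strictMonoOn_rayIntegral hg hgC hf4 hu.1.aestronglyMeasurable hu.1.integrable_sq hpos
    hu0).injOn ht hτ (((const_mul_mem_Nehari_iff hu hune ht).1 htu).trans hτu.symm)

/-- unique projection of a nonnegative u ∈ Θ_ε onto the Nehari manifold, maximizing I_ε along the ray. -/
theorem statement5
    (N : ℕ) (hN : 3 ≤ N) (α : ℝ) (hα : 0 < α ∧ α < 1)
    (f : ℝ → ℝ) (l₀ : ℝ) (hl₀ : 0 < l₀) (V : RN N → ℝ)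
    (hVc : Continuous V) (hVbd : ∃ M : ℝ, M < l₀ ∧ ∀ x, |V x| ≤ M)
    (hV0 : 0 < V0 N V) (hVinf : V0 N V < Vinf N V)
    (hf1 : ContDiff ℝ 1 f) (hf1' : ∀ t ≤ (0 : ℝ), f t = 0)
    (hf1'' : Tendsto (fun t => f t / t) (𝓝[>] (0 : ℝ)) (𝓝 0))
    (hf2 : ∃ q C₀ : ℝ, 2 < q ∧ q < 2 * (N : ℝ) / ((N : ℝ) - 2 * α) ∧ 0 < C₀ ∧
      ∀ t : ℝ, |deriv f t| ≤ C₀ * (1 + |t| ^ (q - 2)))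
    (hf3 : Tendsto (fun t => f t / t) atTop (𝓝 l₀))
    (hf4 : StrictMonoOn (fun t => f t / t) (Set.Ioi (0 : ℝ)))
    :
    ∀ ε : ℝ, 0 < ε → ∀ u ∈ ThetaEps N α V l₀ ε,
      (∀ᵐ x : RN N ∂(volume : Measure (RN N)), 0 ≤ u x) →
      ∃ tε : ℝ, 0 < tε ∧ (fun x => tε * u x) ∈ Nehari N α V f ε ∧
        (∀ t : ℝ, 0 < t → (fun x => t * u x) ∈ Nehari N α V f ε → t = tε) ∧
        ∀ t : ℝ, 0 < t →
          Ieps N α V f ε (fun x => t * u x) ≤ Ieps N α V f ε (fun x => tε * u x) :=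
  statement5_general N α f l₀ V hVc hVbd hV0 hf1 hf1' hf1'' hf3 hf4

end
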